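/- arXiv:cs/0510060 — 4 statements merged into one kernel-verified Lean document; each statement's English description precedes it below -/
import Mathlib

section
/- Let n be a positive integer, let ν : Fin n → ℝ with ν i > 0 for all i, and let P > 0. Suppose ξ > 0 satisfies ∑_{i} max(0, ξ − 1/ν_i) = P. Then for every p : Fin n → ℝ with p_i ≥ 0 for all i and ∑_i p_i ≤ P, one has ∑_i log(1 + p_i ν_i) ≤ ∑_i log(1 + max(0, ξ − 1/ν_i) ν_i), and moreover ∑_i log(1 + max(0, ξ − 1/ν_i) ν_i) = ∑_{i : ξ ν_i ≥ 1} log(ξ ν_i). (Water-filling: the power allocation p_i = max(0, ξ − 1/ν_i) maximizes the total rate ∑ log(1 + p_i ν_i) under the total power constraint.) -/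
/-!
Introduce a Lagrange multiplier `1/ξ` for the power budget. For each channel the water-filling
power `q = max 0 (ξ - 1/ν)` maximizes the concave function `p ↦ log (1 + p ν) - p / ξ` on
`p ≥ 0`: by the tangent-line bound `log x ≤ log y + x / y - 1` at `y = 1 + q ν`, this is
stationarity at `q` when `ξ ν ≥ 1`, and a nonpositive slope at `q = 0` when `ξ ν < 1`. Summing
over the channels, any feasible allocation uses at most the power `∑ q = P`, so its rate is at
most that of `q`. The value follows from `1 + q ν = max 1 (ξ ν)`.
-/

open Finset Real

lemma log_le_log_add_div_sub_one {x y : ℝ} (hx : 0 < x) (hy : 0 < y) :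
    log x ≤ log y + x / y - 1 := by
  have := log_le_sub_one_of_pos (div_pos hx hy)
  rw [log_div hx.ne' hy.ne'] at this
  linarith

lemma one_add_max_sub_inv_mul {ν : ℝ} (hν : 0 < ν) (ξ : ℝ) :
    1 + max 0 (ξ - 1 / ν) * ν = max 1 (ξ * ν) := by
  rw [max_mul_of_nonneg _ _ hν.le, zero_mul, sub_mul, one_div_mul_cancel hν.ne', add_max,
    add_zero, add_sub_cancel]

lemma log_one_add_mul_sub_div_le_waterfilling {ν ξ p : ℝ} (hν : 0 < ν) (hξ : 0 < ξ)
    (hp : 0 ≤ p) :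
    log (1 + p * ν) - p / ξ ≤ log (1 + max 0 (ξ - 1 / ν) * ν) - max 0 (ξ - 1 / ν) / ξ := by
  have htangent := log_le_log_add_div_sub_one (x := 1 + p * ν) (by positivity)
    (by positivity : 0 < 1 + max 0 (ξ - 1 / ν) * ν)
  rw [one_add_max_sub_inv_mul hν] at htangent ⊢
  rcases le_or_gt 1 (ξ * ν) with hlevel | hlevel
  · have hq : max 0 (ξ - 1 / ν) = ξ - 1 / ν := by
      rw [max_eq_right]
      rw [sub_nonneg, div_le_iff₀ hν]
      linarith
    have hslope : (1 + p * ν) / (ξ * ν) - 1 = p / ξ - (ξ - 1 / ν) / ξ := by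
      field_simp
      ring
    simp only [max_eq_right hlevel, hq] at htangent ⊢
    linarith
  · have hq : max 0 (ξ - 1 / ν) = 0 := by
      rw [max_eq_left]
      rw [sub_nonpos, le_div_iff₀ hν]
      linarith
    have hgain : p * ν ≤ p / ξ := by
      rw [le_div_iff₀ hξ]
      nlinarith
    simp only [max_eq_left hlevel.le, hq, log_one, div_one, zero_div] at htangent ⊢
    linarith

section

variable {ι : Type*} [Fintype ι] {ν : ι → ℝ} {ξ : ℝ}

theorem sum_log_one_add_mul_le_waterfilling (hν : ∀ i, 0 < ν i) (hξ : 0 < ξ) {p : ι → ℝ}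
    (hp : ∀ i, 0 ≤ p i) (hbudget : ∑ i, p i ≤ ∑ i, max 0 (ξ - 1 / ν i)) :
    ∑ i, log (1 + p i * ν i) ≤ ∑ i, log (1 + max 0 (ξ - 1 / ν i) * ν i) := by
  have hlagrange : ∑ i, (log (1 + p i * ν i) - p i / ξ) ≤
      ∑ i, (log (1 + max 0 (ξ - 1 / ν i) * ν i) - max 0 (ξ - 1 / ν i) / ξ) :=
    sum_le_sum fun i _ => log_one_add_mul_sub_div_le_waterfilling (hν i) hξ (hp i)
  have hcost : ∑ i, p i / ξ ≤ ∑ i, max 0 (ξ - 1 / ν i) / ξ := by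
    rw [← sum_div, ← sum_div]
    exact div_le_div_of_nonneg_right hbudget hξ.le
  rw [sum_sub_distrib, sum_sub_distrib] at hlagrange
  linarith

theorem sum_log_one_add_max_sub_inv_mul (hν : ∀ i, 0 < ν i) :
    ∑ i, log (1 + max 0 (ξ - 1 / ν i) * ν i) =
      ∑ i ∈ univ.filter (fun i => 1 ≤ ξ * ν i), log (ξ * ν i) := by
  rw [sum_filter]
  refine sum_congr rfl fun i _ => ?_
  rw [one_add_max_sub_inv_mul (hν i)]
  split_ifs with h
  · rw [max_eq_right h]
  · rw [max_eq_left (not_le.mp h).le, log_one]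

end

theorem waterfilling_optimal_general
    (n : ℕ) (ν : Fin n → ℝ) (hν : ∀ i, 0 < ν i)
    (P : ℝ) (ξ : ℝ) (hξ : 0 < ξ)
    (hlevel : ∑ i, max 0 (ξ - 1 / ν i) = P) :
    (∀ p : Fin n → ℝ, (∀ i, 0 ≤ p i) → ∑ i, p i ≤ P →
      ∑ i, Real.log (1 + p i * ν i) ≤
        ∑ i, Real.log (1 + max 0 (ξ - 1 / ν i) * ν i)) ∧
    ∑ i, Real.log (1 + max 0 (ξ - 1 / ν i) * ν i) =
      ∑ i ∈ Finset.univ.filter (fun i => 1 ≤ ξ * ν i), Real.log (ξ * ν i) := by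
  refine ⟨fun p hp hbudget => ?_, sum_log_one_add_max_sub_inv_mul hν⟩
  exact sum_log_one_add_mul_le_waterfilling hν hξ hp (hlevel ▸ hbudget)

/-- **Water-filling for parallel Gaussian channels.**
Given channel gains `ν i > 0` and total power `P > 0`, if the water level `ξ > 0`
satisfies `∑ i, max 0 (ξ - 1/ν i) = P`, then the allocation `p i = max 0 (ξ - 1/ν i)`
maximizes `∑ i, log (1 + p i * ν i)` among all nonnegative allocations of total power
at most `P`, and the optimal value is `∑_{i : ξ ν i ≥ 1} log (ξ ν i)`. -/
theorem waterfilling_optimal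
    (n : ℕ) (hn : 0 < n) (ν : Fin n → ℝ) (hν : ∀ i, 0 < ν i)
    (P : ℝ) (hP : 0 < P) (ξ : ℝ) (hξ : 0 < ξ)
    (hlevel : ∑ i, max 0 (ξ - 1 / ν i) = P) :
    (∀ p : Fin n → ℝ, (∀ i, 0 ≤ p i) → ∑ i, p i ≤ P →
      ∑ i, Real.log (1 + p i * ν i) ≤
        ∑ i, Real.log (1 + max 0 (ξ - 1 / ν i) * ν i)) ∧
    ∑ i, Real.log (1 + max 0 (ξ - 1 / ν i) * ν i) =
      ∑ i ∈ Finset.univ.filter (fun i => 1 ≤ ξ * ν i), Real.log (ξ * ν i) :=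
  waterfilling_optimal_general n ν hν P ξ hξ hlevel
end

section
/- Let f : ℝ → ℝ be a measurable nonnegative function with f(λ) = 0 for λ ≤ 0 and ∫_{0}^{∞} f(λ) dλ = 1, let μ be the probability measure on ℝ with density f with respect to Lebesgue measure, and let ξ > 0. Define g : ℝ → ℝ by g(λ) = max(0, ξ − 1/λ) for λ > 0 and g(λ) = 0 for λ ≤ 0. Then the pushforward measure of μ under g equals μ((−∞, 1/ξ]) · δ_0 + ν, where δ_0 is the Dirac measure at 0 and ν is the measure on ℝ with Lebesgue density γ ↦ f(1/(ξ − γ))/(ξ − γ)² for γ ∈ (0, ξ) and 0 elsewhere. -/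
/-! On `λ ≤ 1/ξ` the power vanishes, which produces the atom `μ (Iic (1/ξ)) • δ₀`. On `λ > 1/ξ`
the power map is a bijection onto `(0, ξ)` with inverse `γ ↦ (ξ - γ)⁻¹`, whose derivative is
`(ξ - γ)⁻²`, so the one-dimensional change of variables gives the density of the continuous part. -/

open MeasureTheory Set

namespace MeasureTheory.Measure

variable {α β : Type*} [MeasurableSpace α] [MeasurableSpace β]

theorem map_restrict_of_eqOn_const {μ : Measure α} {s : Set α} {g : α → β} {c : β}
    (hs : MeasurableSet s) (hg : EqOn g (fun _ ↦ c) s) :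
    (μ.restrict s).map g = μ s • dirac c := by
  rw [map_congr (ae_restrict_of_forall_mem hs hg), map_const, restrict_apply_univ]

end MeasureTheory.Measure

theorem map_withDensity_restrict_image_eq_withDensity {ρ : ℝ → ENNReal} {T : Set ℝ}
    {ψ ψ' g : ℝ → ℝ} (hT : MeasurableSet T) (hψ : ∀ x ∈ T, HasDerivWithinAt ψ (ψ' x) T x)
    (hg : Measurable g) (hgψ : LeftInvOn g ψ T) :
    ((volume.withDensity ρ).restrict (ψ '' T)).map g =
      volume.withDensity (T.indicator fun x ↦ ENNReal.ofReal |ψ' x| * ρ (ψ x)) := by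
  ext A hA
  have hpre : g ⁻¹' A ∩ ψ '' T = ψ '' (A ∩ T) := by
    ext y
    constructor
    · rintro ⟨hyA, x, hx, rfl⟩
      exact ⟨x, ⟨by rwa [mem_preimage, hgψ hx] at hyA, hx⟩, rfl⟩
    · rintro ⟨x, ⟨hxA, hx⟩, rfl⟩
      exact ⟨by rwa [mem_preimage, hgψ hx], x, hx, rfl⟩
  rw [Measure.map_apply hg hA, Measure.restrict_apply (hg hA), withDensity_apply', hpre,
    lintegral_image_eq_lintegral_abs_deriv_mul (hA.inter hT)
      (fun x hx ↦ (hψ x hx.2).mono inter_subset_right) (hgψ.injOn.mono inter_subset_right),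
    withDensity_apply _ hA, lintegral_indicator hT, Measure.restrict_restrict hT, inter_comm]

noncomputable def waterfillingPower (ξ l : ℝ) : ℝ := if 0 < l then max 0 (ξ - 1 / l) else 0

theorem measurable_waterfillingPower (ξ : ℝ) : Measurable (waterfillingPower ξ) :=
  Measurable.ite measurableSet_Ioi
    (measurable_const.max (measurable_const.sub (measurable_const.div measurable_id)))
    measurable_const

theorem waterfillingPower_eq_zero {ξ l : ℝ} (hξ : 0 < ξ) (hl : l ≤ 1 / ξ) :
    waterfillingPower ξ l = 0 := by
  unfold waterfillingPower
  split_ifs with hl0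
  · refine max_eq_left (sub_nonpos.mpr ?_)
    rw [le_div_iff₀ hl0]
    rwa [le_div_iff₀ hξ, mul_comm] at hl
  · rfl

theorem waterfillingPower_inv_sub {ξ p : ℝ} (hp : p ∈ Ioo 0 ξ) :
    waterfillingPower ξ (ξ - p)⁻¹ = p := by
  have hξp : 0 < ξ - p := sub_pos.mpr hp.2
  rw [waterfillingPower, if_pos (inv_pos.mpr hξp), one_div, inv_inv, sub_sub_cancel,
    max_eq_right hp.1.le]

theorem image_inv_sub_Ioo {ξ : ℝ} (hξ : 0 < ξ) :
    (fun p ↦ (ξ - p)⁻¹) '' Ioo 0 ξ = Ioi (1 / ξ) := by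
  ext x
  constructor
  · rintro ⟨p, ⟨hp0, hpξ⟩, rfl⟩
    rw [mem_Ioi, one_div]
    exact inv_strictAnti₀ (by linarith) (by linarith)
  · intro hx
    have hx0 : 0 < x := (one_div_pos.mpr hξ).trans hx
    have hxξ : x⁻¹ < ξ := by rwa [mem_Ioi, one_div, inv_lt_comm₀ hξ hx0] at hx
    exact ⟨ξ - x⁻¹, ⟨sub_pos.mpr hxξ, sub_lt_self ξ (inv_pos.mpr hx0)⟩, by simp⟩

theorem hasDerivAt_inv_sub {ξ p : ℝ} (hp : p ≠ ξ) :
    HasDerivAt (fun q ↦ (ξ - q)⁻¹) ((ξ - p) ^ 2)⁻¹ p := by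
  have h := ((hasDerivAt_id' p).const_sub ξ).inv (sub_ne_zero.mpr hp.symm)
  rwa [neg_neg, one_div] at h

theorem waterfilling_power_distribution_general
    (f : ℝ → ℝ)
    (ξ : ℝ) (hξ : 0 < ξ)
    (μ : Measure ℝ) (hμ : μ = volume.withDensity (fun l => ENNReal.ofReal (f l)))
    (g : ℝ → ℝ) (hg : ∀ l : ℝ, g l = if 0 < l then max 0 (ξ - 1 / l) else 0) :
    Measure.map g μ =
      μ (Set.Iic (1 / ξ)) • Measure.dirac (0 : ℝ) +
        volume.withDensity (fun p =>
          if 0 < p ∧ p < ξ then ENNReal.ofReal (f (1 / (ξ - p)) / (ξ - p) ^ 2) else 0) := by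
  obtain rfl : g = waterfillingPower ξ := funext hg
  subst hμ
  conv_lhs =>
    rw [← Measure.restrict_add_restrict_compl (μ := volume.withDensity _)
      (measurableSet_Iic (a := 1 / ξ))]
  rw [Measure.map_add _ _ (measurable_waterfillingPower ξ), compl_Iic,
    Measure.map_restrict_of_eqOn_const measurableSet_Iic
      (fun l hl ↦ waterfillingPower_eq_zero hξ hl),
    ← image_inv_sub_Ioo hξ, map_withDensity_restrict_image_eq_withDensity measurableSet_Ioo
      (fun p hp ↦ (hasDerivAt_inv_sub hp.2.ne).hasDerivWithinAt)
      (measurable_waterfillingPower ξ) (fun p hp ↦ waterfillingPower_inv_sub hp)]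
  congr 2
  funext p
  simp only [indicator_apply, mem_Ioo]
  split_ifs with hp
  · have hξp : 0 < (ξ - p) ^ 2 := pow_pos (sub_pos.mpr hp.2) 2
    rw [abs_of_pos (inv_pos.mpr hξp), ← ENNReal.ofReal_mul (inv_nonneg.mpr hξp.le), one_div,
      inv_mul_eq_div]
  · rfl

/-- **Distribution of the per-eigenvector transmit power under water-filling.**
If the channel gain `λ` has probability density `f` supported on `(0, ∞)` and the
transmit power is `g(λ) = max 0 (ξ - 1/λ)` (for `λ > 0`, and `0` otherwise), then the
law of the transmit power is `F(1/ξ) δ₀ + ν`, where `ν` has Lebesgue density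
`γ ↦ f(1/(ξ - γ))/(ξ - γ)²` on `(0, ξ)` and `0` elsewhere. -/
theorem waterfilling_power_distribution
    (f : ℝ → ℝ) (hf_meas : Measurable f) (hf_nonneg : ∀ x, 0 ≤ f x)
    (hf_zero : ∀ x ≤ (0 : ℝ), f x = 0)
    (hf_prob : ∫ l in Set.Ioi (0 : ℝ), f l = 1)
    (ξ : ℝ) (hξ : 0 < ξ)
    (μ : Measure ℝ) (hμ : μ = volume.withDensity (fun l => ENNReal.ofReal (f l)))
    (g : ℝ → ℝ) (hg : ∀ l : ℝ, g l = if 0 < l then max 0 (ξ - 1 / l) else 0) :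
    Measure.map g μ =
      μ (Set.Iic (1 / ξ)) • Measure.dirac (0 : ℝ) +
        volume.withDensity (fun p =>
          if 0 < p ∧ p < ξ then ENNReal.ofReal (f (1 / (ξ - p)) / (ξ - p) ^ 2) else 0) :=
  waterfilling_power_distribution_general f ξ hξ μ hμ g hg
end

section
/- Let t be a positive integer and P > 0. Let (Ω, 𝔽, ℙ) be a probability space and S : Ω → Matrix (Fin t) (Fin t) ℂ a measurable random matrix that is almost surely Hermitian positive semidefinite and satisfies E[‖S‖] < ∞. For q : Fin t → ℝ with q_k ≥ 0 for all k, define Ψ(q) = E[log det(I_t + S · diag(q))] (the determinant is real and ≥ 1 almost surely). Then q* with q*_k ≥ 0 and ∑_k q*_k = P maximizes Ψ over {q : q_k ≥ 0, ∑_k q_k = P} if and only if there exists a constant μ ∈ ℝ such that for every k: if q*_k > 0 then E[((I_t + S·diag(q*))^{-1} S)_{kk}] = μ, and if q*_k = 0 then E[((I_t + S·diag(q*))^{-1} S)_{kk}] ≤ μ. (The matrix (I + S·diag(q*))^{-1} S is almost surely Hermitian, so its diagonal entries are real.) -/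
open MeasureTheory Matrix
open scoped ComplexOrder

/-- Matrices inherit the product measurable structure. -/
instance matrixMeasurableSpace {m n α : Type*} [MeasurableSpace α] :
    MeasurableSpace (Matrix m n α) :=
  inferInstanceAs (MeasurableSpace (m → n → α))

attribute [local instance] Matrix.frobeniusSeminormedAddCommGroup

/-!
Write a channel realisation as `A = Bᴴ B`. By Sylvester's identity `det (1 + A diag q) = det N(q)`
with `N(q) = 1 + B diag q Bᴴ`, which is positive definite for `q ≥ 0` and affine in `q`. Hence along
a segment `q₀ + s (q₁ - q₀)` the determinant is `det N(q₀) ∏ᵢ (1 + s κᵢ)`, where the `κᵢ` are the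
eigenvalues of the pencil `(N(q₀), N(q₁) - N(q₀))`; they satisfy `1 + κᵢ > 0` and
`∑ᵢ κᵢ = ∑ₖ (q₁ - q₀)ₖ ((1 + A diag q₀)⁻¹ A)ₖₖ`. Concavity of `log` then gives the supergradient
inequality and the one-sided derivative along the segment; both pass to the expectation, the latter
by dominated convergence. The supergradient inequality makes the Kuhn–Tucker condition sufficient;
conversely, moving the power of an active antenna `k` to any antenna `j` cannot increase `Ψ` to
first order.
-/

open Set Filter Topology

theorem one_add_mul_pos_of_mem_Icc {κ s : ℝ} (hκ : 0 < 1 + κ) (hs : s ∈ Icc 0 1) :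
    0 < 1 + s * κ := by
  rcases hs.1.eq_or_lt with rfl | hs₀
  · simp
  · nlinarith [mul_pos hs₀ hκ, hs.2]

namespace Real

theorem inv_mul_log_one_add_mul_mem_Icc {κ s : ℝ} (hκ : 0 < 1 + κ) (hs : s ∈ Ioc 0 1) :
    s⁻¹ * log (1 + s * κ) ∈ Icc (log (1 + κ)) κ := by
  have hconc := strictConcaveOn_log_Ioi.concaveOn.2 (mem_Ioi.mpr hκ) (mem_Ioi.mpr one_pos)
    hs.1.le (sub_nonneg.mpr hs.2) (add_sub_cancel s 1)
  simp only [smul_eq_mul, log_one, mul_zero, add_zero] at hconc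
  rw [mem_Icc, le_inv_mul_iff₀ hs.1, inv_mul_le_iff₀ hs.1]
  refine ⟨hconc.trans_eq (by ring_nf), ?_⟩
  linarith [log_le_sub_one_of_pos (one_add_mul_pos_of_mem_Icc hκ (Ioc_subset_Icc_self hs))]

theorem tendsto_inv_mul_log_one_add_mul (κ : ℝ) :
    Tendsto (fun s => s⁻¹ * log (1 + s * κ)) (𝓝[>] 0) (𝓝 κ) := by
  have h : HasDerivAt (fun s => log (1 + s * κ)) κ 0 := by
    simpa using (((hasDerivAt_id (0 : ℝ)).mul_const κ).const_add 1).log (by simp)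
  simpa using h.tendsto_slope_zero_right

end Real

theorem add_smul_sub_nonneg {n : Type*} {q₀ q₁ : n → ℝ} (h₀ : 0 ≤ q₀) (h₁ : 0 ≤ q₁) {s : ℝ}
    (hs : s ∈ Icc 0 1) : 0 ≤ q₀ + s • (q₁ - q₀) :=
  (convex_Ici (0 : n → ℝ)).add_smul_sub_mem h₀ h₁ hs

namespace Matrix

instance borelSpace {m n : Type*} [Fintype m] [Fintype n] : BorelSpace (Matrix m n ℂ) :=
  inferInstanceAs (BorelSpace (m → n → ℂ))

section Diagonal

variable {n : Type*} [DecidableEq n]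

theorem diagonal_ofReal_add_smul (q d : n → ℝ) (s : ℝ) :
    (diagonal fun k => ((q + s • d) k : ℂ)) =
      (diagonal fun k => (q k : ℂ)) + (s : ℂ) • diagonal fun k => (d k : ℂ) := by
  rw [← diagonal_smul, diagonal_add]
  congr 1
  ext k
  simp

theorem posSemidef_diagonal_ofReal {q : n → ℝ} (hq : 0 ≤ q) :
    (diagonal fun k => (q k : ℂ)).PosSemidef :=
  posSemidef_diagonal_iff.mpr fun k => Complex.zero_le_real.mpr (hq k)

end Diagonal

section Square

variable {n m : Type*} [Fintype n] [DecidableEq n] [Fintype m] [DecidableEq m]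

theorem inv_one_add_mul_mul {α : Type*} [CommRing α] (X : Matrix n m α) (Y : Matrix m n α) :
    (1 + X * Y)⁻¹ * X = X * (1 + Y * X)⁻¹ := by
  have hcomm : (1 + X * Y) * X = X * (1 + Y * X) := by
    rw [Matrix.add_mul, Matrix.mul_add, Matrix.one_mul, Matrix.mul_one, Matrix.mul_assoc]
  by_cases h : IsUnit (1 + Y * X).det
  · have h' : IsUnit (1 + X * Y).det := by rwa [det_one_add_mul_comm]
    calc (1 + X * Y)⁻¹ * X = (1 + X * Y)⁻¹ * (X * (1 + Y * X)) * (1 + Y * X)⁻¹ := by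
          rw [Matrix.mul_assoc, Matrix.mul_assoc, mul_nonsing_inv _ h, Matrix.mul_one]
      _ = X * (1 + Y * X)⁻¹ := by
          rw [← hcomm, ← Matrix.mul_assoc, nonsing_inv_mul _ h', Matrix.one_mul]
  · have h' : ¬IsUnit (1 + X * Y).det := by rwa [det_one_add_mul_comm]
    rw [nonsing_inv_apply_not_isUnit _ h, nonsing_inv_apply_not_isUnit _ h', Matrix.zero_mul,
      Matrix.mul_zero]

open scoped MatrixOrder in
theorem PosSemidef.exists_eq_conjTranspose_mul_self {A : Matrix n n ℂ} (hA : A.PosSemidef) :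
    ∃ B : Matrix n n ℂ, A = Bᴴ * B :=
  CStarAlgebra.nonneg_iff_eq_star_mul_self.mp hA.nonneg

theorem PosSemidef.one_sub_inv_one_add {Y : Matrix n n ℂ} (hY : Y.PosSemidef) :
    (1 - (1 + Y)⁻¹).PosSemidef := by
  have hN : (1 + Y).PosDef := PosDef.one.add_posSemidef hY
  set N := 1 + Y
  have hNN : N * N⁻¹ = 1 := mul_nonsing_inv _ ((isUnit_iff_isUnit_det _).mp hN.isUnit)
  have hNN' : N⁻¹ * N = 1 := nonsing_inv_mul _ ((isUnit_iff_isUnit_det _).mp hN.isUnit)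
  -- `1 - N⁻¹ = N⁻¹ Y = N⁻¹ Y (1 + Y) N⁻¹`, a sum of congruences of `Y` and of `Y²`
  have key : 1 - N⁻¹ = N⁻¹ᴴ * Y * N⁻¹ + (Y * N⁻¹)ᴴ * (Y * N⁻¹) := by
    rw [conjTranspose_mul, hY.isHermitian.eq, hN.isHermitian.inv.eq]
    calc 1 - N⁻¹ = N⁻¹ * Y * (N * N⁻¹) := by
          rw [hNN, Matrix.mul_one, show Y = N - 1 from (add_sub_cancel_left 1 Y).symm,
            Matrix.mul_sub, hNN', Matrix.mul_one]
      _ = _ := by simp only [N, Matrix.mul_add, Matrix.add_mul, Matrix.one_mul, Matrix.mul_assoc]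
  rw [key]
  exact (hY.conjTranspose_mul_mul_same _).add (posSemidef_conjTranspose_mul_self _)

theorem det_conjStarAlgAut (U : unitary (Matrix n n ℂ)) (M : Matrix n n ℂ) :
    det (Unitary.conjStarAlgAut ℂ _ U M) = det M := by
  rw [Unitary.conjStarAlgAut_apply, det_mul, det_mul, mul_right_comm, ← det_mul,
    Unitary.mul_star_self_of_mem U.2, det_one, one_mul]

theorem IsHermitian.det_one_add_smul {K : Matrix n n ℂ} (hK : K.IsHermitian) (s : ℝ) :
    det (1 + (s : ℂ) • K) = ∏ i, ((1 + s * hK.eigenvalues i : ℝ) : ℂ) := by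
  conv_lhs => rw [hK.spectral_theorem,
    ← map_one (Unitary.conjStarAlgAut ℂ _ hK.eigenvectorUnitary), ← map_smul, ← map_add,
    det_conjStarAlgAut]
  rw [← diagonal_one, ← diagonal_smul, diagonal_add, det_diagonal]
  simp

theorem IsHermitian.one_add_eigenvalues_pos {K : Matrix n n ℂ} (hK : K.IsHermitian)
    (h : (1 + K).PosDef) (i : n) : 0 < 1 + hK.eigenvalues i := by
  have hv := hK.eigenvectorBasis.orthonormal.1 i
  have := h.re_dotProduct_pos (x := ⇑(hK.eigenvectorBasis i))
    (by simpa using hK.eigenvectorBasis.orthonormal.ne_zero i)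
  rw [add_mulVec, one_mulVec, dotProduct_add, map_add, ← hK.eigenvalues_eq] at this
  simpa [dotProduct_comm, ← EuclideanSpace.inner_eq_star_dotProduct, hv] using this

/-- The `κ i` are the generalized eigenvalues of the pencil `(N, X)`. -/
theorem PosDef.exists_det_add_smul_eq {N X : Matrix n n ℂ} (hN : N.PosDef) (hX : X.IsHermitian) :
    ∃ κ : n → ℝ, (∀ s : ℝ, det (N + (s : ℂ) • X) = det N * ((∏ i, (1 + s * κ i) : ℝ) : ℂ)) ∧
      ∑ i, κ i = (N⁻¹ * X).trace.re ∧ ((N + X).PosDef → ∀ i, 0 < 1 + κ i) := by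
  obtain ⟨C, rfl⟩ := hN.posSemidef.exists_eq_conjTranspose_mul_self
  have hC : IsUnit C.det := by
    have := (isUnit_iff_isUnit_det _).mp hN.isUnit
    rw [det_mul] at this
    exact isUnit_of_mul_isUnit_right this
  have hCC' : (C⁻¹)ᴴ * Cᴴ = 1 := by
    rw [← conjTranspose_mul, mul_nonsing_inv C hC, conjTranspose_one]
  have hC'C : Cᴴ * (C⁻¹)ᴴ = 1 := by
    rw [← conjTranspose_mul, nonsing_inv_mul C hC, conjTranspose_one]
  set K := (C⁻¹)ᴴ * X * C⁻¹
  have hK : K.IsHermitian := isHermitian_conjTranspose_mul_mul _ hX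
  have hpencil (s : ℝ) : Cᴴ * C + (s : ℂ) • X = Cᴴ * (1 + (s : ℂ) • K) * C := by
    have : Cᴴ * K * C = X := by
      simp only [K, ← Matrix.mul_assoc, hC'C, Matrix.one_mul]
      rw [Matrix.mul_assoc, nonsing_inv_mul C hC, Matrix.mul_one]
    rw [Matrix.mul_add, Matrix.add_mul, Matrix.mul_one, Matrix.mul_smul, Matrix.smul_mul, this]
  refine ⟨hK.eigenvalues, fun s => ?_, ?_, fun hNX i => hK.one_add_eigenvalues_pos ?_ i⟩
  · rw [hpencil, det_mul, det_mul, mul_right_comm, ← det_mul, hK.det_one_add_smul,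
      Complex.ofReal_prod]
  · rw [mul_inv_rev, ← conjTranspose_nonsing_inv, ← trace_mul_cycle,
      hK.trace_eq_sum_eigenvalues]
    simp
  · have hinj : Function.Injective (C⁻¹).mulVec := mulVec_injective_iff_isUnit.mpr
      ((isUnit_iff_isUnit_det _).mpr (isUnit_nonsing_inv_det C hC))
    convert hNX.conjTranspose_mul_mul_same hinj using 1
    simp only [K, Matrix.mul_add, Matrix.add_mul, ← Matrix.mul_assoc, hCC', Matrix.one_mul,
      mul_nonsing_inv C hC]

theorem measurable_inv : Measurable fun M : Matrix n n ℂ => M⁻¹ := by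
  have : (fun M : Matrix n n ℂ => M⁻¹) = fun M => M.det⁻¹ • M.adjugate := by
    ext1 M
    rw [inv_def, Ring.inverse_eq_inv']
  rw [this]
  exact continuous_id.matrix_det.measurable.inv.smul continuous_id.matrix_adjugate.measurable

end Square

theorem norm_apply_le_frobenius_norm {m n : Type*} [Fintype m] [Fintype n]
    (A : Matrix m n ℂ) (i : m) (j : n) : ‖A i j‖ ≤ ‖A‖ :=
  (PiLp.norm_apply_le (WithLp.toLp 2 (A i)) j).trans
    (PiLp.norm_apply_le (WithLp.toLp 2 fun i => WithLp.toLp 2 (A i)) i)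

theorem re_apply_le_frobenius_norm {n : Type*} [Fintype n] (A : Matrix n n ℂ) (k : n) :
    (A k k).re ≤ ‖A‖ :=
  (Complex.re_le_norm _).trans (A.norm_apply_le_frobenius_norm k k)

end Matrix

section Channel

variable {n m : Type*} [Fintype n] [DecidableEq n] [Fintype m] [DecidableEq m]

noncomputable def mutualInfo (A : Matrix n n ℂ) (q : n → ℝ) : ℝ :=
  Real.log (1 + A * diagonal fun k => (q k : ℂ)).det.re

noncomputable def mutualInfoGrad (A : Matrix n n ℂ) (q : n → ℝ) (k : n) : ℝ :=
  (((1 + A * diagonal fun j => (q j : ℂ))⁻¹ * A) k k).re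

@[simp]
theorem mutualInfo_zero (A : Matrix n n ℂ) : mutualInfo A 0 = 0 := by
  simp [mutualInfo]

@[simp]
theorem mutualInfoGrad_zero (A : Matrix n n ℂ) (k : n) : mutualInfoGrad A 0 k = (A k k).re := by
  simp [mutualInfoGrad]

theorem mutualInfo_conjTranspose_mul_self (B : Matrix m n ℂ) (q : n → ℝ) :
    mutualInfo (Bᴴ * B) q = Real.log (1 + B * (diagonal fun k => (q k : ℂ)) * Bᴴ).det.re := by
  rw [mutualInfo, Matrix.mul_assoc, det_one_add_mul_comm]

theorem inv_one_add_mul_diagonal_mul_conjTranspose_mul_self (B : Matrix m n ℂ) (q : n → ℝ) :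
    (1 + Bᴴ * B * diagonal fun k => (q k : ℂ))⁻¹ * (Bᴴ * B) =
      Bᴴ * (1 + B * (diagonal fun k => (q k : ℂ)) * Bᴴ)⁻¹ * B := by
  rw [Matrix.mul_assoc Bᴴ B, ← Matrix.mul_assoc, inv_one_add_mul_mul, Matrix.mul_assoc B]

theorem sum_mul_mutualInfoGrad_conjTranspose_mul_self (B : Matrix m n ℂ) (q d : n → ℝ) :
    ∑ k, d k * mutualInfoGrad (Bᴴ * B) q k =
      ((1 + B * (diagonal fun k => (q k : ℂ)) * Bᴴ)⁻¹ *
        (B * (diagonal fun k => (d k : ℂ)) * Bᴴ)).trace.re := by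
  have htr : (Bᴴ * (1 + B * (diagonal fun k => (q k : ℂ)) * Bᴴ)⁻¹ * B *
      diagonal fun k => (d k : ℂ)).trace = ((1 + B * (diagonal fun k => (q k : ℂ)) * Bᴴ)⁻¹ *
        (B * (diagonal fun k => (d k : ℂ)) * Bᴴ)).trace := by
    rw [Matrix.mul_assoc, Matrix.mul_assoc, trace_mul_comm Bᴴ]
    simp only [Matrix.mul_assoc]
  rw [← htr]
  simp only [mutualInfoGrad, inv_one_add_mul_diagonal_mul_conjTranspose_mul_self, trace,
    diag_apply, mul_diagonal, Complex.re_sum, Complex.re_mul_ofReal]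
  exact Finset.sum_congr rfl fun k _ => mul_comm _ _

variable {A : Matrix n n ℂ} {q₀ q₁ : n → ℝ}

theorem exists_mutualInfo_add_smul_sub_eq (hA : A.PosSemidef) (h₀ : 0 ≤ q₀) (h₁ : 0 ≤ q₁) :
    ∃ κ : n → ℝ, (∀ i, 0 < 1 + κ i) ∧ ∑ i, κ i = ∑ k, (q₁ k - q₀ k) * mutualInfoGrad A q₀ k ∧
      ∀ s ∈ Icc (0 : ℝ) 1,
        mutualInfo A (q₀ + s • (q₁ - q₀)) = mutualInfo A q₀ + ∑ i, Real.log (1 + s * κ i) := by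
  obtain ⟨B, rfl⟩ := hA.exists_eq_conjTranspose_mul_self
  set N : (n → ℝ) → Matrix n n ℂ := fun q => 1 + B * (diagonal fun k => (q k : ℂ)) * Bᴴ
  have hN (q : n → ℝ) (hq : 0 ≤ q) : (N q).PosDef :=
    PosDef.one.add_posSemidef ((posSemidef_diagonal_ofReal hq).mul_mul_conjTranspose_same B)
  set X := B * (diagonal fun k => ((q₁ - q₀) k : ℂ)) * Bᴴ
  have hX : X.IsHermitian := isHermitian_mul_mul_conjTranspose B <|
    isHermitian_diagonal_iff.mpr fun k => Complex.conj_ofReal _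
  have hline (s : ℝ) : N (q₀ + s • (q₁ - q₀)) = N q₀ + (s : ℂ) • X := by
    simp only [N, X, diagonal_ofReal_add_smul, Matrix.mul_add, Matrix.add_mul, Matrix.mul_smul,
      Matrix.smul_mul, add_assoc]
  obtain ⟨κ, hdet, htr, hpos⟩ := (hN q₀ h₀).exists_det_add_smul_eq hX
  have hκ : ∀ i, 0 < 1 + κ i := hpos <| by
    have h1 := hline 1
    rw [one_smul, add_sub_cancel, Complex.ofReal_one, one_smul] at h1
    exact h1 ▸ hN q₁ h₁
  refine ⟨κ, hκ, htr.trans (sum_mul_mutualInfoGrad_conjTranspose_mul_self B q₀ (q₁ - q₀)).symm,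
    fun s hs => ?_⟩
  have hfac (i : n) : 0 < 1 + s * κ i := one_add_mul_pos_of_mem_Icc (hκ i) hs
  rw [mutualInfo_conjTranspose_mul_self, mutualInfo_conjTranspose_mul_self]
  change Real.log (N _).det.re = Real.log (N q₀).det.re + _
  rw [hline, hdet, Complex.re_mul_ofReal,
    Real.log_mul (Complex.pos_iff.mp (hN q₀ h₀).det_pos).1.ne'
      (Finset.prod_pos fun i _ => hfac i).ne',
    Real.log_prod fun i _ => (hfac i).ne']

theorem mutualInfoGrad_mem_Icc (hA : A.PosSemidef) {q : n → ℝ} (hq : 0 ≤ q) (k : n) :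
    mutualInfoGrad A q k ∈ Icc 0 (A k k).re := by
  obtain ⟨B, rfl⟩ := hA.exists_eq_conjTranspose_mul_self
  rw [mutualInfoGrad, inv_one_add_mul_diagonal_mul_conjTranspose_mul_self]
  set Y := B * (diagonal fun k => (q k : ℂ)) * Bᴴ
  have hY : Y.PosSemidef := (posSemidef_diagonal_ofReal hq).mul_mul_conjTranspose_same B
  have hM : (Bᴴ * (1 + Y)⁻¹ * B).PosSemidef :=
    (PosDef.one.add_posSemidef hY).inv.posSemidef.conjTranspose_mul_mul_same B
  have hAM : (Bᴴ * B - Bᴴ * (1 + Y)⁻¹ * B).PosSemidef := by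
    simpa [Matrix.mul_sub, Matrix.sub_mul] using
      hY.one_sub_inv_one_add.conjTranspose_mul_mul_same B
  have h₁ := (Complex.nonneg_iff.mp (hM.diag_nonneg (i := k))).1
  have h₂ := (Complex.nonneg_iff.mp (hAM.diag_nonneg (i := k))).1
  rw [Matrix.sub_apply, Complex.sub_re] at h₂
  exact ⟨h₁, by linarith⟩

theorem mutualInfo_slope_mem_Icc (hA : A.PosSemidef) (h₀ : 0 ≤ q₀) (h₁ : 0 ≤ q₁) {s : ℝ}
    (hs : s ∈ Ioc 0 1) :
    s⁻¹ * (mutualInfo A (q₀ + s • (q₁ - q₀)) - mutualInfo A q₀) ∈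
      Icc (mutualInfo A q₁ - mutualInfo A q₀) (∑ k, (q₁ k - q₀ k) * mutualInfoGrad A q₀ k) := by
  obtain ⟨κ, hκ, hsum, hseg⟩ := exists_mutualInfo_add_smul_sub_eq hA h₀ h₁
  have hend := hseg 1 (right_mem_Icc.mpr zero_le_one)
  rw [one_smul, add_sub_cancel] at hend
  rw [hseg s (Ioc_subset_Icc_self hs), hend, add_sub_cancel_left, add_sub_cancel_left, ← hsum,
    Finset.mul_sum]
  exact ⟨Finset.sum_le_sum fun i _ => by
      simpa using (Real.inv_mul_log_one_add_mul_mem_Icc (hκ i) hs).1,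
    Finset.sum_le_sum fun i _ => (Real.inv_mul_log_one_add_mul_mem_Icc (hκ i) hs).2⟩

theorem tendsto_mutualInfo_slope (hA : A.PosSemidef) (h₀ : 0 ≤ q₀) (h₁ : 0 ≤ q₁) :
    Tendsto (fun s => s⁻¹ * (mutualInfo A (q₀ + s • (q₁ - q₀)) - mutualInfo A q₀)) (𝓝[>] 0)
      (𝓝 (∑ k, (q₁ k - q₀ k) * mutualInfoGrad A q₀ k)) := by
  obtain ⟨κ, -, hsum, hseg⟩ := exists_mutualInfo_add_smul_sub_eq hA h₀ h₁
  rw [← hsum]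
  refine (tendsto_finsetSum _ fun i _ => Real.tendsto_inv_mul_log_one_add_mul (κ i)).congr' ?_
  filter_upwards [Ioc_mem_nhdsGT zero_lt_one] with s hs
  rw [hseg s (Ioc_subset_Icc_self hs), add_sub_cancel_left, Finset.mul_sum]

theorem mutualInfo_le_add_sum_mul_grad (hA : A.PosSemidef) (h₀ : 0 ≤ q₀) (h₁ : 0 ≤ q₁) :
    mutualInfo A q₁ ≤ mutualInfo A q₀ + ∑ k, (q₁ k - q₀ k) * mutualInfoGrad A q₀ k := by
  have := (mutualInfo_slope_mem_Icc hA h₀ h₁ (right_mem_Ioc.mpr one_pos)).2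
  rw [inv_one, one_mul, one_smul, add_sub_cancel] at this
  linarith

theorem mutualInfo_nonneg (hA : A.PosSemidef) (hq : 0 ≤ q₀) : 0 ≤ mutualInfo A q₀ := by
  have h := mutualInfo_le_add_sum_mul_grad hA hq le_rfl
  simp only [Pi.zero_apply, zero_sub, neg_mul, Finset.sum_neg_distrib, mutualInfo_zero] at h
  have : 0 ≤ ∑ k, q₀ k * mutualInfoGrad A q₀ k :=
    Finset.sum_nonneg fun k _ => mul_nonneg (hq k) (mutualInfoGrad_mem_Icc hA hq k).1
  linarith

theorem mutualInfo_le_sum_mul (hA : A.PosSemidef) (hq : 0 ≤ q₁) :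
    mutualInfo A q₁ ≤ ∑ k, q₁ k * (A k k).re := by
  simpa using mutualInfo_le_add_sum_mul_grad hA le_rfl hq

end Channel

section Random

variable {n Ω : Type*} [Fintype n] [DecidableEq n] [MeasurableSpace Ω] {ℙ : Measure Ω}
  {S : Ω → Matrix n n ℂ} {q₀ q₁ : n → ℝ}

theorem measurable_mutualInfo (hS : Measurable S) (q : n → ℝ) :
    Measurable fun ω => mutualInfo (S ω) q :=
  Real.measurable_log.comp <| Complex.measurable_re.comp <|
    (continuous_const.add (continuous_id.mul continuous_const)).matrix_det.measurable.comp hS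

theorem measurable_mutualInfoGrad (hS : Measurable S) (q : n → ℝ) (k : n) :
    Measurable fun ω => mutualInfoGrad (S ω) q k := by
  have hinv : Measurable fun ω => (1 + S ω * diagonal fun j => (q j : ℂ))⁻¹ :=
    Matrix.measurable_inv.comp
      ((continuous_const.add (continuous_id.mul continuous_const)).measurable.comp hS)
  simp only [mutualInfoGrad, Matrix.mul_apply]
  exact Complex.measurable_re.comp <| Finset.measurable_sum _ fun j _ =>
    ((measurable_pi_apply j).comp ((measurable_pi_apply k).comp hinv)).mul
      ((measurable_pi_apply k).comp ((measurable_pi_apply j).comp hS))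

theorem integrable_mutualInfo (hS_meas : Measurable S) (hS_psd : ∀ᵐ ω ∂ℙ, (S ω).PosSemidef)
    (hS_int : Integrable (fun ω => ‖S ω‖) ℙ) {q : n → ℝ} (hq : 0 ≤ q) :
    Integrable (fun ω => mutualInfo (S ω) q) ℙ := by
  refine (hS_int.const_mul (∑ k, q k)).mono'
    (measurable_mutualInfo hS_meas q).aestronglyMeasurable ?_
  filter_upwards [hS_psd] with ω hω
  rw [Real.norm_of_nonneg (mutualInfo_nonneg hω hq), Finset.sum_mul]
  exact (mutualInfo_le_sum_mul hω hq).trans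
    (Finset.sum_le_sum fun k _ =>
      mul_le_mul_of_nonneg_left (Matrix.re_apply_le_frobenius_norm _ k) (hq k))

theorem integrable_mutualInfoGrad (hS_meas : Measurable S) (hS_psd : ∀ᵐ ω ∂ℙ, (S ω).PosSemidef)
    (hS_int : Integrable (fun ω => ‖S ω‖) ℙ) {q : n → ℝ} (hq : 0 ≤ q) (k : n) :
    Integrable (fun ω => mutualInfoGrad (S ω) q k) ℙ := by
  refine hS_int.mono' (measurable_mutualInfoGrad hS_meas q k).aestronglyMeasurable ?_
  filter_upwards [hS_psd] with ω hω
  have h := mutualInfoGrad_mem_Icc hω hq k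
  rw [Real.norm_of_nonneg h.1]
  exact h.2.trans (Matrix.re_apply_le_frobenius_norm _ k)

theorem integral_sum_mul_mutualInfoGrad (hS_meas : Measurable S)
    (hS_psd : ∀ᵐ ω ∂ℙ, (S ω).PosSemidef) (hS_int : Integrable (fun ω => ‖S ω‖) ℙ) {q : n → ℝ}
    (hq : 0 ≤ q) (d : n → ℝ) :
    ∫ ω, ∑ k, d k * mutualInfoGrad (S ω) q k ∂ℙ = ∑ k, d k * ∫ ω, mutualInfoGrad (S ω) q k ∂ℙ := by
  rw [integral_finsetSum _ fun k _ =>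
    (integrable_mutualInfoGrad hS_meas hS_psd hS_int hq k).const_mul (d k)]
  simp only [integral_const_mul]

theorem integral_mutualInfo_le (hS_meas : Measurable S) (hS_psd : ∀ᵐ ω ∂ℙ, (S ω).PosSemidef)
    (hS_int : Integrable (fun ω => ‖S ω‖) ℙ) (h₀ : 0 ≤ q₀) (h₁ : 0 ≤ q₁) :
    ∫ ω, mutualInfo (S ω) q₁ ∂ℙ ≤
      ∫ ω, mutualInfo (S ω) q₀ ∂ℙ + ∑ k, (q₁ k - q₀ k) * ∫ ω, mutualInfoGrad (S ω) q₀ k ∂ℙ := by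
  have hgrad : Integrable (fun ω => ∑ k, (q₁ k - q₀ k) * mutualInfoGrad (S ω) q₀ k) ℙ :=
    integrable_finsetSum _ fun k _ =>
      (integrable_mutualInfoGrad hS_meas hS_psd hS_int h₀ k).const_mul _
  rw [← integral_sum_mul_mutualInfoGrad hS_meas hS_psd hS_int h₀,
    ← integral_add (integrable_mutualInfo hS_meas hS_psd hS_int h₀) hgrad]
  refine integral_mono_ae (integrable_mutualInfo hS_meas hS_psd hS_int h₁)
    ((integrable_mutualInfo hS_meas hS_psd hS_int h₀).add hgrad) ?_
  filter_upwards [hS_psd] with ω hω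
  exact mutualInfo_le_add_sum_mul_grad hω h₀ h₁

theorem tendsto_integral_mutualInfo_slope (hS_meas : Measurable S)
    (hS_psd : ∀ᵐ ω ∂ℙ, (S ω).PosSemidef) (hS_int : Integrable (fun ω => ‖S ω‖) ℙ)
    (h₀ : 0 ≤ q₀) (h₁ : 0 ≤ q₁) :
    Tendsto (fun s => s⁻¹ * (∫ ω, mutualInfo (S ω) (q₀ + s • (q₁ - q₀)) ∂ℙ -
        ∫ ω, mutualInfo (S ω) q₀ ∂ℙ)) (𝓝[>] 0)
      (𝓝 (∑ k, (q₁ k - q₀ k) * ∫ ω, mutualInfoGrad (S ω) q₀ k ∂ℙ)) := by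
  have hI (q : n → ℝ) (hq : 0 ≤ q) := integrable_mutualInfo (ℙ := ℙ) hS_meas hS_psd hS_int hq
  have hsmall : ∀ᶠ s in 𝓝[>] (0 : ℝ), s ∈ Ioc 0 1 := Ioc_mem_nhdsGT one_pos
  -- each slope lies between the chord over the whole segment and the derivative
  have hDCT := tendsto_integral_filter_of_dominated_convergence
    (F := fun s ω => s⁻¹ * (mutualInfo (S ω) (q₀ + s • (q₁ - q₀)) - mutualInfo (S ω) q₀))
    (fun ω => max |mutualInfo (S ω) q₁ - mutualInfo (S ω) q₀|
      |∑ k, (q₁ k - q₀ k) * mutualInfoGrad (S ω) q₀ k|)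
    (Eventually.of_forall fun s => ((measurable_mutualInfo hS_meas _).sub
      (measurable_mutualInfo hS_meas q₀)).const_mul _ |>.aestronglyMeasurable)
    (hsmall.mono fun s hs => by
      filter_upwards [hS_psd] with ω hω
      have h := mutualInfo_slope_mem_Icc hω h₀ h₁ hs
      exact abs_le_max_abs_abs h.1 h.2)
    (((hI _ h₁).sub (hI _ h₀)).abs.sup (integrable_finsetSum _ fun k _ =>
      (integrable_mutualInfoGrad hS_meas hS_psd hS_int h₀ k).const_mul _).abs)
    (by filter_upwards [hS_psd] with ω hω using tendsto_mutualInfo_slope hω h₀ h₁)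
  rw [integral_sum_mul_mutualInfoGrad hS_meas hS_psd hS_int h₀] at hDCT
  refine hDCT.congr' ?_
  filter_upwards [hsmall] with s hs
  rw [integral_const_mul,
    integral_sub (hI _ (add_smul_sub_nonneg h₀ h₁ (Ioc_subset_Icc_self hs))) (hI _ h₀)]

end Random

section KuhnTucker

variable {n : Type*} [Fintype n] {Ψ : (n → ℝ) → ℝ} {F : n → ℝ} {P : ℝ} {q₀ : n → ℝ}

theorem sum_mul_nonpos_of_forall_le (hmax : ∀ q, 0 ≤ q → ∑ k, q k = P → Ψ q ≤ Ψ q₀)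
    (h₀ : 0 ≤ q₀) (h₀P : ∑ k, q₀ k = P) {q : n → ℝ} (hq : 0 ≤ q) (hqP : ∑ k, q k = P)
    (hslope : Tendsto (fun s => s⁻¹ * (Ψ (q₀ + s • (q - q₀)) - Ψ q₀)) (𝓝[>] 0)
      (𝓝 (∑ k, (q k - q₀ k) * F k))) :
    ∑ k, (q k - q₀ k) * F k ≤ 0 := by
  refine le_of_tendsto hslope ?_
  filter_upwards [Ioc_mem_nhdsGT one_pos] with s hs
  refine mul_nonpos_of_nonneg_of_nonpos (inv_nonneg.mpr hs.1.le) (sub_nonpos.mpr ?_)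
  refine hmax _ (add_smul_sub_nonneg h₀ hq (Ioc_subset_Icc_self hs)) ?_
  simp [Finset.sum_add_distrib, ← Finset.mul_sum, hqP, h₀P]

theorem le_apply_of_forall_le_of_pos (hmax : ∀ q, 0 ≤ q → ∑ k, q k = P → Ψ q ≤ Ψ q₀)
    (h₀ : 0 ≤ q₀) (h₀P : ∑ k, q₀ k = P)
    (hslope : ∀ q, 0 ≤ q → ∑ k, q k = P →
      Tendsto (fun s => s⁻¹ * (Ψ (q₀ + s • (q - q₀)) - Ψ q₀)) (𝓝[>] 0)
        (𝓝 (∑ k, (q k - q₀ k) * F k)))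
    (j : n) {k : n} (hk : 0 < q₀ k) : F j ≤ F k := by
  classical
  -- move the power `q₀ k` from antenna `k` to antenna `j`
  set q := q₀ + (Pi.single j (q₀ k) - Pi.single k (q₀ k))
  have hq : 0 ≤ q := fun l => by
    have hl : (0 : ℝ) ≤ q₀ l := h₀ l
    simp only [q, Pi.zero_apply, Pi.add_apply, Pi.sub_apply, Pi.single_apply]
    split_ifs <;> subst_vars <;> linarith
  have hqP : ∑ l, q l = P := by simp [q, Finset.sum_add_distrib, Finset.sum_sub_distrib, h₀P]
  have hdiff : ∑ l, (q l - q₀ l) * F l = q₀ k * F j - q₀ k * F k := by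
    simp [q, sub_mul, Finset.sum_sub_distrib, Pi.single_apply]
  have := sum_mul_nonpos_of_forall_le hmax h₀ h₀P hq hqP (hslope q hq hqP)
  nlinarith

theorem exists_multiplier_of_forall_le (h : ∀ j k, 0 < q₀ k → F j ≤ F k) :
    ∃ μ, ∀ k, (0 < q₀ k → F k = μ) ∧ (q₀ k = 0 → F k ≤ μ) := by
  by_cases hpos : ∃ k₀, 0 < q₀ k₀
  · obtain ⟨k₀, hk₀⟩ := hpos
    exact ⟨F k₀, fun k => ⟨fun hk => (h k k₀ hk₀).antisymm (h k₀ k hk), fun _ => h k k₀ hk₀⟩⟩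
  · obtain ⟨μ, hμ⟩ := (Set.finite_range F).bddAbove
    exact ⟨μ, fun k => ⟨fun hk => absurd ⟨k, hk⟩ hpos, fun _ => hμ (mem_range_self k)⟩⟩

theorem forall_le_of_exists_multiplier (h₀ : 0 ≤ q₀) (h₀P : ∑ k, q₀ k = P)
    (hsuper : ∀ q, 0 ≤ q → ∑ k, q k = P → Ψ q ≤ Ψ q₀ + ∑ k, (q k - q₀ k) * F k)
    (hμ : ∃ μ, ∀ k, (0 < q₀ k → F k = μ) ∧ (q₀ k = 0 → F k ≤ μ)) :
    ∀ q, 0 ≤ q → ∑ k, q k = P → Ψ q ≤ Ψ q₀ := by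
  obtain ⟨μ, hμ⟩ := hμ
  intro q hq hqP
  have hle : ∑ k, (q k - q₀ k) * F k ≤ ∑ k, (q k - q₀ k) * μ :=
    Finset.sum_le_sum fun k _ => by
      rcases (show (0 : ℝ) ≤ q₀ k from h₀ k).lt_or_eq with hk | hk
      · rw [(hμ k).1 hk]
      · rw [← hk, sub_zero]
        exact mul_le_mul_of_nonneg_left ((hμ k).2 hk.symm) (hq k)
  have hzero : ∑ k, (q k - q₀ k) * μ = 0 := by
    rw [← Finset.sum_mul, Finset.sum_sub_distrib, hqP, h₀P, sub_self, zero_mul]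
  linarith [hsuper q hq hqP]

theorem forall_le_iff_exists_multiplier (h₀ : 0 ≤ q₀) (h₀P : ∑ k, q₀ k = P)
    (hsuper : ∀ q, 0 ≤ q → ∑ k, q k = P → Ψ q ≤ Ψ q₀ + ∑ k, (q k - q₀ k) * F k)
    (hslope : ∀ q, 0 ≤ q → ∑ k, q k = P →
      Tendsto (fun s => s⁻¹ * (Ψ (q₀ + s • (q - q₀)) - Ψ q₀)) (𝓝[>] 0)
        (𝓝 (∑ k, (q k - q₀ k) * F k))) :
    (∀ q, 0 ≤ q → ∑ k, q k = P → Ψ q ≤ Ψ q₀) ↔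
      ∃ μ, ∀ k, (0 < q₀ k → F k = μ) ∧ (q₀ k = 0 → F k ≤ μ) := by
  exact ⟨fun hmax => exists_multiplier_of_forall_le fun j _ hk =>
      le_apply_of_forall_le_of_pos hmax h₀ h₀P hslope j hk,
    forall_le_of_exists_multiplier h₀ h₀P hsuper⟩

end KuhnTucker

theorem kuhn_tucker_diagonal_covariance_general
    (t : ℕ)
    {Ω : Type*} [MeasurableSpace Ω] (ℙ : Measure Ω)
    (S : Ω → Matrix (Fin t) (Fin t) ℂ) (hS_meas : Measurable S)
    (hS_psd : ∀ᵐ ω ∂ℙ, (S ω).PosSemidef)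
    (hS_int : Integrable (fun ω => ‖S ω‖) ℙ)
    (P : ℝ)
    (Ψ : (Fin t → ℝ) → ℝ)
    (hΨ : ∀ q : Fin t → ℝ, Ψ q =
      ∫ ω, Real.log ((1 + S ω * Matrix.diagonal (fun k => (q k : ℂ))).det.re) ∂ℙ)
    (qstar : Fin t → ℝ) (hqstar_nonneg : ∀ k, 0 ≤ qstar k)
    (hqstar_sum : ∑ k, qstar k = P) :
    (∀ q : Fin t → ℝ, (∀ k, 0 ≤ q k) → ∑ k, q k = P → Ψ q ≤ Ψ qstar) ↔
    (∃ μ : ℝ, ∀ k : Fin t,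
      (0 < qstar k →
        (∫ ω, (((1 + S ω * Matrix.diagonal (fun j => (qstar j : ℂ)))⁻¹ * S ω) k k).re ∂ℙ)
          = μ) ∧
      (qstar k = 0 →
        (∫ ω, (((1 + S ω * Matrix.diagonal (fun j => (qstar j : ℂ)))⁻¹ * S ω) k k).re ∂ℙ)
          ≤ μ)) := by
  obtain rfl : Ψ = fun q => ∫ ω, mutualInfo (S ω) q ∂ℙ := funext hΨ
  exact forall_le_iff_exists_multiplier hqstar_nonneg hqstar_sum
    (fun q hq _ => integral_mutualInfo_le hS_meas hS_psd hS_int hqstar_nonneg hq)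
    (fun q hq _ => tendsto_integral_mutualInfo_slope hS_meas hS_psd hS_int hqstar_nonneg hq)

/-- **Kuhn–Tucker conditions for the optimal diagonal power allocation.**
Let `S` be an integrable random Hermitian positive semidefinite `t × t` matrix and
`Ψ(q) = E[log det(I + S diag q)]`.  A feasible power allocation `q*` (nonnegative,
summing to `P`) maximizes `Ψ` over all feasible allocations if and only if there is a
constant `μ` with `E[((I + S diag q*)⁻¹ S)_{kk}] = μ` whenever `q*_k > 0` and
`E[((I + S diag q*)⁻¹ S)_{kk}] ≤ μ` whenever `q*_k = 0`. -/
theorem kuhn_tucker_diagonal_covariance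
    (t : ℕ) (ht : 0 < t)
    {Ω : Type*} [MeasurableSpace Ω] (ℙ : Measure Ω) [IsProbabilityMeasure ℙ]
    (S : Ω → Matrix (Fin t) (Fin t) ℂ) (hS_meas : Measurable S)
    (hS_psd : ∀ᵐ ω ∂ℙ, (S ω).PosSemidef)
    (hS_int : Integrable (fun ω => ‖S ω‖) ℙ)
    (P : ℝ) (hP : 0 < P)
    (Ψ : (Fin t → ℝ) → ℝ)
    (hΨ : ∀ q : Fin t → ℝ, Ψ q =
      ∫ ω, Real.log ((1 + S ω * Matrix.diagonal (fun k => (q k : ℂ))).det.re) ∂ℙ)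
    (qstar : Fin t → ℝ) (hqstar_nonneg : ∀ k, 0 ≤ qstar k)
    (hqstar_sum : ∑ k, qstar k = P) :
    (∀ q : Fin t → ℝ, (∀ k, 0 ≤ q k) → ∑ k, q k = P → Ψ q ≤ Ψ qstar) ↔
    (∃ μ : ℝ, ∀ k : Fin t,
      (0 < qstar k →
        (∫ ω, (((1 + S ω * Matrix.diagonal (fun j => (qstar j : ℂ)))⁻¹ * S ω) k k).re ∂ℙ)
          = μ) ∧
      (qstar k = 0 →
        (∫ ω, (((1 + S ω * Matrix.diagonal (fun j => (qstar j : ℂ)))⁻¹ * S ω) k k).re ∂ℙ)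
          ≤ μ)) :=
  kuhn_tucker_diagonal_covariance_general t ℙ S hS_meas hS_psd hS_int P Ψ hΨ qstar hqstar_nonneg
    hqstar_sum
end

section
/- Let a, b > 0 with a ≠ b, and define f(x) = e^{1/x} · ∫_{1/x}^{∞} t^{-1} e^{-t} dt for x > 0. Then ∫_{0}^{∞} e^{-x} / ((1 + a x)(1 + b x)) dx = (f(a) − f(b)) / (a − b). -/
open MeasureTheory Set Real

/-!
Partial fractions split the integrand into `(a e^{-x}/(1 + a x) - b e^{-x}/(1 + b x)) / (a - b)`,
and the shift `t = x + 1/a` identifies `∫_0^∞ a e^{-x}/(1 + a x) dx` with `f a`.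
-/

theorem exp_mul_setIntegral_Ioi_inv_mul_exp_neg (c : ℝ) :
    exp c * ∫ t in Ioi c, t⁻¹ * exp (-t) = ∫ x in Ioi (0 : ℝ), exp (-x) / (x + c) := by
  have hpre : (· + c) ⁻¹' Ioi c = Ioi (0 : ℝ) := by ext x; simp
  rw [← (measurePreserving_add_right volume c).setIntegral_preimage_emb
    (Homeomorph.addRight c).measurableEmbedding, hpre, ← integral_const_mul]
  refine setIntegral_congr_fun measurableSet_Ioi fun x _ => ?_
  have hc : exp c * exp (-c) = 1 := by rw [← exp_add, add_neg_cancel, exp_zero]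
  rw [neg_add, exp_add]
  linear_combination (x + c)⁻¹ * exp (-x) * hc

theorem integrableOn_exp_neg_div_one_add_mul {a : ℝ} (ha : 0 ≤ a) :
    IntegrableOn (fun x => exp (-x) / (1 + a * x)) (Ioi 0) := by
  have hden : ∀ x ∈ Ioi (0 : ℝ), 1 ≤ 1 + a * x := fun x hx =>
    le_add_of_nonneg_right (mul_nonneg ha (le_of_lt hx))
  refine (exp_neg_integrableOn_Ioi 0 one_pos).mono' ?_ ?_
  · refine ContinuousOn.aestronglyMeasurable ?_ measurableSet_Ioi
    exact (by fun_prop : Continuous fun x => exp (-x)).continuousOn.div (by fun_prop)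
      fun x hx => (one_pos.trans_le (hden x hx)).ne'
  · filter_upwards [ae_restrict_mem measurableSet_Ioi] with x hx
    rw [norm_div, norm_of_nonneg (exp_pos _).le, norm_of_nonneg (zero_le_one.trans (hden x hx)),
      neg_one_mul]
    exact div_le_self (exp_pos _).le (hden x hx)

theorem exp_inv_mul_setIntegral_Ioi_inv_mul_exp_neg {a : ℝ} (ha : 0 < a) :
    exp (1 / a) * ∫ t in Ioi (1 / a), t⁻¹ * exp (-t)
      = a * ∫ x in Ioi (0 : ℝ), exp (-x) / (1 + a * x) := by
  rw [exp_mul_setIntegral_Ioi_inv_mul_exp_neg, ← integral_const_mul]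
  refine setIntegral_congr_fun measurableSet_Ioi fun x _ => ?_
  field_simp
  ring

theorem one_div_one_add_mul_mul_one_add_mul {a b x : ℝ} (hab : a ≠ b) (ha : 1 + a * x ≠ 0)
    (hb : 1 + b * x ≠ 0) :
    1 / ((1 + a * x) * (1 + b * x)) = (a / (1 + a * x) - b / (1 + b * x)) / (a - b) := by
  rw [eq_div_iff (sub_ne_zero.mpr hab), div_sub_div _ _ ha hb]
  field_simp
  ring

/-- **Key integral identity for the beamforming condition (off-diagonal terms).**
For `a, b > 0` with `a ≠ b`, and `f(x) = e^{1/x} ∫_{1/x}^∞ t⁻¹ e^{-t} dt`,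
`∫_0^∞ e^{-x} / ((1 + a x)(1 + b x)) dx = (f(a) - f(b))/(a - b)`. -/
theorem exp_integral_two_poles
    (a b : ℝ) (ha : 0 < a) (hb : 0 < b) (hab : a ≠ b)
    (f : ℝ → ℝ)
    (hf : ∀ x : ℝ, 0 < x →
      f x = Real.exp (1 / x) * ∫ t in Set.Ioi (1 / x), t⁻¹ * Real.exp (-t)) :
    ∫ x in Set.Ioi (0 : ℝ), Real.exp (-x) / ((1 + a * x) * (1 + b * x))
      = (f a - f b) / (a - b) := by
  have hsplit : ∀ x ∈ Ioi (0 : ℝ), exp (-x) / ((1 + a * x) * (1 + b * x))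
      = (a * (exp (-x) / (1 + a * x)) - b * (exp (-x) / (1 + b * x))) / (a - b) := by
    intro x hx
    have hxa : 1 + a * x ≠ 0 := by nlinarith [mem_Ioi.mp hx]
    have hxb : 1 + b * x ≠ 0 := by nlinarith [mem_Ioi.mp hx]
    rw [div_eq_mul_one_div, one_div_one_add_mul_mul_one_add_mul hab hxa hxb]
    ring
  rw [setIntegral_congr_fun measurableSet_Ioi hsplit, integral_div,
    integral_sub ((integrableOn_exp_neg_div_one_add_mul ha.le).const_mul a)
      ((integrableOn_exp_neg_div_one_add_mul hb.le).const_mul b),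
    integral_const_mul, integral_const_mul, hf a ha, hf b hb,
    exp_inv_mul_setIntegral_Ioi_inv_mul_exp_neg ha, exp_inv_mul_setIntegral_Ioi_inv_mul_exp_neg hb]
end
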